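/- arXiv:2510.17542 — 5 statements merged into one kernel-verified Lean document; each statement's English description precedes it below -/
import Mathlib

section
/- Let P₁ ∈ C^{n₁×n₂} and P₂ ∈ C^{n₂×n₃}, let Δ₁, Δ₂, Δ₃ be partitions of ⟨n₁⟩, ⟨n₂⟩, ⟨n₃⟩ respectively. If P₁ is [Δ₁]-stable on Δ₂ and P₂ is [Δ₂]-stable on Δ₃, then P₁P₂ is [Δ₁]-stable on Δ₃. -/
/-- `P` is `[Δ]`-stable on `Sg`: for every block `K ∈ Δ` and `L ∈ Sg`, the submatrix
`P_K^L` is generalized stochastic, i.e. its row sums `∑_{j∈L} P i j` agree for `i ∈ K`. -/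
def IsStableOn {m n : ℕ} (P : Matrix (Fin m) (Fin n) ℂ)
    (Δ : Finpartition (Finset.univ : Finset (Fin m)))
    (Sg : Finpartition (Finset.univ : Finset (Fin n))) : Prop :=
  ∀ K ∈ Δ.parts, ∀ L ∈ Sg.parts, ∀ i ∈ K, ∀ i' ∈ K,
    ∑ j ∈ L, P i j = ∑ j ∈ L, P i' j

/-!
Expanding the product, `∑_{j∈L} (P₁P₂)_{ij} = ∑_k (P₁)_{ik} g_k` with `g_k = ∑_{j∈L} (P₂)_{kj}`.
Stability of `P₂` makes `g` constant on each block `M ∈ Δ₂`, so grouping `k` by blocks turns the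
sum into `∑_M (∑_{k∈M} (P₁)_{ik}) g_M`, and stability of `P₁` makes each coefficient independent
of `i ∈ K`.
-/

open Finset

theorem Finpartition.sum_sum_parts {ι M : Type*} [DecidableEq ι] [AddCommMonoid M]
    {s : Finset ι} (P : Finpartition s) (f : ι → M) :
    ∑ t ∈ P.parts, ∑ i ∈ t, f i = ∑ i ∈ s, f i := by
  conv_rhs => rw [← P.biUnion_parts, sum_biUnion P.supIndep.pairwiseDisjoint]
  rfl

theorem Matrix.sum_mul_apply {l m n R : Type*} [Fintype m] [NonUnitalNonAssocSemiring R]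
    (A : Matrix l m R) (B : Matrix m n R) (i : l) (L : Finset n) :
    ∑ j ∈ L, (A * B) i j = ∑ k, A i k * ∑ j ∈ L, B k j := by
  simp only [Matrix.mul_apply, mul_sum]
  exact sum_comm

theorem Finpartition.sum_mul_eq_of_sum_parts_eq {ι R : Type*} [DecidableEq ι]
    [NonUnitalNonAssocSemiring R] {s : Finset ι} (P : Finpartition s) {f f' g : ι → R}
    (hf : ∀ t ∈ P.parts, ∑ k ∈ t, f k = ∑ k ∈ t, f' k)
    (hg : ∀ t ∈ P.parts, ∀ k ∈ t, ∀ k' ∈ t, g k = g k') :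
    ∑ k ∈ s, f k * g k = ∑ k ∈ s, f' k * g k := by
  rw [← P.sum_sum_parts, ← P.sum_sum_parts]
  refine sum_congr rfl fun t ht => ?_
  obtain ⟨k₀, hk₀⟩ := P.nonempty_of_mem_parts ht
  have factor (h : ι → R) : ∑ k ∈ t, h k * g k = (∑ k ∈ t, h k) * g k₀ := by
    rw [sum_mul]
    exact sum_congr rfl fun k hk => by rw [hg t ht k hk k₀ hk₀]
  rw [factor f, factor f', hf t ht]

/-- if P₁ is [Δ₁]-stable on Δ₂ and P₂ is [Δ₂]-stable on Δ₃,
then P₁P₂ is [Δ₁]-stable on Δ₃. -/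
theorem mul_isStableOn {n₁ n₂ n₃ : ℕ}
    (P₁ : Matrix (Fin n₁) (Fin n₂) ℂ) (P₂ : Matrix (Fin n₂) (Fin n₃) ℂ)
    (Δ₁ : Finpartition (Finset.univ : Finset (Fin n₁)))
    (Δ₂ : Finpartition (Finset.univ : Finset (Fin n₂)))
    (Δ₃ : Finpartition (Finset.univ : Finset (Fin n₃)))
    (h₁ : IsStableOn P₁ Δ₁ Δ₂) (h₂ : IsStableOn P₂ Δ₂ Δ₃) :
    IsStableOn (P₁ * P₂) Δ₁ Δ₃ := by
  intro K hK L hL i hi i' hi'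
  rw [Matrix.sum_mul_apply, Matrix.sum_mul_apply]
  exact Δ₂.sum_mul_eq_of_sum_parts_eq (fun M hM => h₁ K hK M hM i hi i' hi')
    fun M hM k hk k' hk' => h₂ M hM L hL k hk k' hk'
end

section
/- Let t ≥ 2 and let P_b ∈ C^{n_b×n_{b+1}} be [Δ_b]-stable on Δ_{b+1} for b = 1,…,t, where Δ_b is a partition of ⟨n_b⟩. Then the product P₁P₂⋯P_t is [Δ₁]-stable on Δ_{t+1} and (P₁P₂⋯P_t)^{-+} = P₁^{-+}P₂^{-+}⋯P_t^{-+}. -/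
/-- Product `M 0 * M 1 * ⋯ * M (t-1)` of a chain of composable complex matrices. -/
noncomputable def chainProd : ∀ (t : ℕ) (τ : Fin (t + 1) → Type) [∀ i, Fintype (τ i)]
    [∀ i, DecidableEq (τ i)]
    (_ : ∀ b : Fin t, Matrix (τ b.castSucc) (τ b.succ) ℂ),
    Matrix (τ 0) (τ (Fin.last t)) ℂ
  | 0, τ, _, _, _ => (1 : Matrix (τ 0) (τ 0) ℂ)
  | (t + 1), τ, _, _, M =>
      M 0 * chainProd t (fun i => τ i.succ) (fun b => M b.succ)

/-!
Grouped matrices multiply: splitting the middle index of `P * Q` along the blocks `A` of the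
middle partition gives `∑_{j ∈ L} (P Q)_{ij} = ∑_A ∑_{k ∈ A} P_{ik} ∑_{j ∈ L} Q_{kj}
= ∑_A g_{KA} h_{AL}` for `i ∈ K`. Induction along the chain then gives the grouped matrix of the
product, and a matrix that has a grouped matrix is stable.
-/

open Finset

theorem Finpartition.sum_parts_sum {R β : Type*} [DecidableEq β] [AddCommMonoid R] {s : Finset β}
    (P : Finpartition s) (f : β → R) : ∑ A ∈ P.parts, ∑ k ∈ A, f k = ∑ k ∈ s, f k := by
  conv_rhs => rw [← P.biUnion_parts]
  exact (sum_biUnion P.supIndep.pairwiseDisjoint).symm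

/-- `g` is the grouped matrix `P^{-+}` of `P` for the partitions `Δ` of rows and `Sg` of columns. -/
def IsGroupedMatrix {R α β : Type*} [AddCommMonoid R] [Fintype α] [DecidableEq α] [Fintype β]
    [DecidableEq β] (P : Matrix α β R) (Δ : Finpartition (univ : Finset α))
    (Sg : Finpartition (univ : Finset β)) (g : Matrix Δ.parts Sg.parts R) : Prop :=
  ∀ (K : Δ.parts) (L : Sg.parts), ∀ i ∈ (K : Finset α), ∑ j ∈ (L : Finset β), P i j = g K L

namespace IsGroupedMatrix

variable {R α β γ : Type*} [Fintype α] [DecidableEq α] [Fintype β] [DecidableEq β]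
  [Fintype γ] [DecidableEq γ]

theorem isStableOn {m n : ℕ} {P : Matrix (Fin m) (Fin n) ℂ}
    {Δ : Finpartition (univ : Finset (Fin m))} {Sg : Finpartition (univ : Finset (Fin n))}
    {g : Matrix Δ.parts Sg.parts ℂ} (hP : IsGroupedMatrix P Δ Sg g) : IsStableOn P Δ Sg :=
  fun K hK L hL i hi i' hi' => (hP ⟨K, hK⟩ ⟨L, hL⟩ i hi).trans (hP ⟨K, hK⟩ ⟨L, hL⟩ i' hi').symm

theorem one [AddCommMonoidWithOne R] (Δ : Finpartition (univ : Finset α)) :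
    IsGroupedMatrix (1 : Matrix α α R) Δ Δ 1 := by
  intro K L i hi
  simp only [Matrix.one_apply, sum_ite_eq]
  by_cases hKL : K = L
  · simp [hKL ▸ hi, hKL]
  · have hiL : i ∉ (L : Finset α) := fun hiL =>
      hKL (Subtype.ext (Δ.eq_of_mem_parts K.2 L.2 hi hiL))
    simp [hiL, hKL]

theorem mul [NonUnitalNonAssocSemiring R] {P : Matrix α β R} {Q : Matrix β γ R}
    {Δ : Finpartition (univ : Finset α)} {Sg : Finpartition (univ : Finset β)}
    {Λ : Finpartition (univ : Finset γ)} {g : Matrix Δ.parts Sg.parts R}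
    {h : Matrix Sg.parts Λ.parts R} (hP : IsGroupedMatrix P Δ Sg g)
    (hQ : IsGroupedMatrix Q Sg Λ h) : IsGroupedMatrix (P * Q) Δ Λ (g * h) := by
  intro K L i hi
  calc ∑ j ∈ (L : Finset γ), (P * Q) i j
      = ∑ k, P i k * ∑ j ∈ (L : Finset γ), Q k j := by
        simp only [Matrix.mul_apply, mul_sum]
        exact sum_comm
    _ = ∑ A ∈ Sg.parts, ∑ k ∈ A, P i k * ∑ j ∈ (L : Finset γ), Q k j :=
        (Sg.sum_parts_sum _).symm
    _ = ∑ A : Sg.parts, g K A * h A L := by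
        rw [← sum_attach, univ_eq_attach]
        refine sum_congr rfl fun A _ => ?_
        rw [sum_congr rfl fun k hk => by rw [hQ A L k hk], ← sum_mul, hP K A i hi]

end IsGroupedMatrix

theorem isGroupedMatrix_chainProd (t : ℕ) (τ : Fin (t + 1) → Type) [∀ i, Fintype (τ i)]
    [∀ i, DecidableEq (τ i)] (Δ : ∀ i, Finpartition (univ : Finset (τ i)))
    (P : ∀ b : Fin t, Matrix (τ b.castSucc) (τ b.succ) ℂ)
    (g : ∀ b : Fin t, Matrix (Δ b.castSucc).parts (Δ b.succ).parts ℂ)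
    (hg : ∀ b, IsGroupedMatrix (P b) (Δ b.castSucc) (Δ b.succ) (g b)) :
    IsGroupedMatrix (chainProd t τ P) (Δ 0) (Δ (Fin.last t))
      (chainProd t (fun i => (Δ i).parts) g) := by
  induction t with
  | zero => exact IsGroupedMatrix.one (Δ 0)
  | succ t ih =>
    exact (hg 0).mul (ih (fun i => τ i.succ) (fun i => Δ i.succ) (fun b => P b.succ)
      (fun b => g b.succ) fun b => hg b.succ)

theorem chainProd_isStableOn_and_grouped_general (t : ℕ)
    (n : Fin (t + 1) → ℕ)
    (Δ : ∀ i : Fin (t + 1), Finpartition (Finset.univ : Finset (Fin (n i))))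
    (P : ∀ b : Fin t, Matrix (Fin (n b.castSucc)) (Fin (n b.succ)) ℂ)
    (g : ∀ b : Fin t, Matrix ↥(Δ b.castSucc).parts ↥(Δ b.succ).parts ℂ)
    (hg : ∀ (b : Fin t) (K : ↥(Δ b.castSucc).parts) (L : ↥(Δ b.succ).parts),
      ∀ i ∈ (K : Finset (Fin (n b.castSucc))),
        ∑ j ∈ (L : Finset (Fin (n b.succ))), P b i j = g b K L) :
    IsStableOn (chainProd t (fun i => Fin (n i)) P) (Δ 0) (Δ (Fin.last t)) ∧
    ∀ (K : ↥(Δ 0).parts) (L : ↥(Δ (Fin.last t)).parts),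
      ∀ i ∈ (K : Finset (Fin (n 0))),
        ∑ j ∈ (L : Finset (Fin (n (Fin.last t)))),
          chainProd t (fun i => Fin (n i)) P i j =
        chainProd t (fun i => ↥(Δ i).parts) g K L := by
  have hgrouped := isGroupedMatrix_chainProd t (fun i => Fin (n i)) Δ P g hg
  exact ⟨hgrouped.isStableOn, hgrouped⟩

/-- if each `P b` is `[Δ_b]`-stable on `Δ_{b+1}` (`t ≥ 2`), then the product
`P₁⋯P_t` is `[Δ₁]`-stable on `Δ_{t+1}` and its grouped matrix is the product of the
grouped matrices `g b` of the `P b`. -/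
theorem chainProd_isStableOn_and_grouped (t : ℕ) (ht : 2 ≤ t)
    (n : Fin (t + 1) → ℕ)
    (Δ : ∀ i : Fin (t + 1), Finpartition (Finset.univ : Finset (Fin (n i))))
    (P : ∀ b : Fin t, Matrix (Fin (n b.castSucc)) (Fin (n b.succ)) ℂ)
    (hstab : ∀ b : Fin t, IsStableOn (P b) (Δ b.castSucc) (Δ b.succ))
    (g : ∀ b : Fin t, Matrix ↥(Δ b.castSucc).parts ↥(Δ b.succ).parts ℂ)
    (hg : ∀ (b : Fin t) (K : ↥(Δ b.castSucc).parts) (L : ↥(Δ b.succ).parts),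
      ∀ i ∈ (K : Finset (Fin (n b.castSucc))),
        ∑ j ∈ (L : Finset (Fin (n b.succ))), P b i j = g b K L) :
    IsStableOn (chainProd t (fun i => Fin (n i)) P) (Δ 0) (Δ (Fin.last t)) ∧
    ∀ (K : ↥(Δ 0).parts) (L : ↥(Δ (Fin.last t)).parts),
      ∀ i ∈ (K : Finset (Fin (n 0))),
        ∑ j ∈ (L : Finset (Fin (n (Fin.last t)))),
          chainProd t (fun i => Fin (n i)) P i j =
        chainProd t (fun i => ↥(Δ i).parts) g K L :=
  chainProd_isStableOn_and_grouped_general t n Δ P g hg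
end

section
/- Let P₁,…,P_t be complex matrices with P_b ∈ C^{n_b×n_{b+1}} [Δ_b]-stable on Δ_{b+1}, where Δ₁ is the trivial one-block partition (⟨n₁⟩) and Δ_{t+1} is the partition of ⟨n_{t+1}⟩ whose blocks are the singletons {j}, j ∈ K, together with K^c (for a fixed nonempty K ⊆ ⟨n_{t+1}⟩). Then the submatrix (P₁P₂⋯P_t)^K consisting of the columns indexed by K has all its rows identical. -/
/-!
The `L`-th block row sum of a product is `∑ⱼ∈L (P * Q) i j = (P *ᵥ w) i` with
`w k = ∑ⱼ∈L Q k j`. If `Q` is `[Σ]`-stable on a partition containing `L`, then `w` is constant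
on the blocks of `Σ`, and `P *ᵥ w` only sees the block row sums of `P` over `Σ`; hence
stability composes, and `P₁ ⋯ P_t` is `[Δ₁]`-stable on `Δ_{t+1}`. With the single block
`Δ₁ = {univ}` and the singleton block `{j}` of `Δ_{t+1}` this says that column `j` is constant.
-/

open Finset Matrix

theorem Finpartition.sum_univ_eq_sum_parts {κ M : Type*} [Fintype κ] [DecidableEq κ]
    [AddCommMonoid M] (Sg : Finpartition (univ : Finset κ)) (f : κ → M) :
    ∑ k, f k = ∑ L ∈ Sg.parts, ∑ k ∈ L, f k := by
  conv_lhs => rw [← Sg.biUnion_parts]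
  exact sum_biUnion Sg.disjoint

theorem Matrix.mulVec_apply_eq_of_sum_parts_eq {ι κ R : Type*} [Fintype κ] [DecidableEq κ]
    [CommSemiring R] (Sg : Finpartition (univ : Finset κ)) {P : Matrix ι κ R} {v : κ → R}
    (hv : ∀ L ∈ Sg.parts, ∀ k ∈ L, ∀ k' ∈ L, v k = v k') {i i' : ι}
    (hP : ∀ L ∈ Sg.parts, ∑ k ∈ L, P i k = ∑ k ∈ L, P i' k) :
    (P *ᵥ v) i = (P *ᵥ v) i' := by
  have hblock : ∀ a, (P *ᵥ v) a =
      ∑ L ∈ Sg.parts.attach, (∑ k ∈ L.1, P a k) * v (Sg.nonempty_of_mem_parts L.2).choose := by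
    intro a
    rw [mulVec, dotProduct, Sg.sum_univ_eq_sum_parts, ← sum_attach]
    refine sum_congr rfl fun L _ => ?_
    rw [sum_mul]
    exact sum_congr rfl fun k hk =>
      congrArg (P a k * ·) (hv _ L.2 _ hk _ (Sg.nonempty_of_mem_parts L.2).choose_spec)
  rw [hblock, hblock]
  exact sum_congr rfl fun L _ => by rw [hP _ L.2]

theorem Matrix.sum_mul_apply_eq_mulVec {ι κ ν R : Type*} [Fintype κ] [NonUnitalCommSemiring R]
    (P : Matrix ι κ R) (Q : Matrix κ ν R) (L : Finset ν) (i : ι) :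
    ∑ j ∈ L, (P * Q) i j = (P *ᵥ fun k => ∑ j ∈ L, Q k j) i := by
  simp only [mul_apply, mulVec, dotProduct, mul_sum]
  exact sum_comm

theorem isStableOn_one {n : ℕ} (Δ : Finpartition (univ : Finset (Fin n))) :
    IsStableOn 1 Δ Δ := by
  intro K hK L hL i hi i' hi'
  have hmem : i ∈ L ↔ i' ∈ L := by
    constructor <;> intro h
    · exact Δ.eq_of_mem_parts hK hL hi h ▸ hi'
    · exact Δ.eq_of_mem_parts hK hL hi' h ▸ hi
  simp only [one_apply, sum_ite_eq, hmem]

theorem IsStableOn.mul {m n p : ℕ} {P : Matrix (Fin m) (Fin n) ℂ} {Q : Matrix (Fin n) (Fin p) ℂ}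
    {Δ : Finpartition (univ : Finset (Fin m))} {Sg : Finpartition (univ : Finset (Fin n))}
    {Θ : Finpartition (univ : Finset (Fin p))} (hP : IsStableOn P Δ Sg)
    (hQ : IsStableOn Q Sg Θ) : IsStableOn (P * Q) Δ Θ := by
  intro K hK L hL i hi i' hi'
  rw [sum_mul_apply_eq_mulVec, sum_mul_apply_eq_mulVec]
  exact mulVec_apply_eq_of_sum_parts_eq Sg (fun M hM k hk k' hk' => hQ M hM L hL k hk k' hk')
    fun M hM => hP K hK M hM i hi i' hi'

theorem chainProd_isStableOn : ∀ (t : ℕ) (n : Fin (t + 1) → ℕ)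
    (Δ : ∀ i : Fin (t + 1), Finpartition (univ : Finset (Fin (n i))))
    (P : ∀ b : Fin t, Matrix (Fin (n b.castSucc)) (Fin (n b.succ)) ℂ),
    (∀ b : Fin t, IsStableOn (P b) (Δ b.castSucc) (Δ b.succ)) →
    IsStableOn (chainProd t (fun i => Fin (n i)) P) (Δ 0) (Δ (Fin.last t))
  | 0, _, Δ, _, _ => isStableOn_one (Δ 0)
  | t + 1, n, Δ, P, hP =>
      (hP 0).mul (chainProd_isStableOn t (fun i => n i.succ) (fun i => Δ i.succ)
        (fun b => P b.succ) (fun b => hP b.succ))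

theorem chainProd_columns_stable_general (t : ℕ)
    (n : Fin (t + 1) → ℕ)
    (Δ : ∀ i : Fin (t + 1), Finpartition (Finset.univ : Finset (Fin (n i))))
    (P : ∀ b : Fin t, Matrix (Fin (n b.castSucc)) (Fin (n b.succ)) ℂ)
    (hstab : ∀ b : Fin t, IsStableOn (P b) (Δ b.castSucc) (Δ b.succ))
    (hΔ₁ : (Δ 0).parts = {Finset.univ})
    (K : Finset (Fin (n (Fin.last t))))
    (hΔlast : (Δ (Fin.last t)).parts =
      (K.image fun j => ({j} : Finset (Fin (n (Fin.last t))))) ∪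
        (if Kᶜ = ∅ then ∅ else {Kᶜ})) :
    ∀ j ∈ K, ∀ i i' : Fin (n 0),
      chainProd t (fun i => Fin (n i)) P i j =
      chainProd t (fun i => Fin (n i)) P i' j := by
  intro j hj i i'
  have huniv : univ ∈ (Δ 0).parts := hΔ₁ ▸ mem_singleton_self _
  have hsingleton : {j} ∈ (Δ (Fin.last t)).parts :=
    hΔlast ▸ mem_union_left _ (mem_image_of_mem _ hj)
  simpa using chainProd_isStableOn t n Δ P hstab _ huniv _ hsingleton i (mem_univ i) i' (mem_univ i')

/-- if each `P b` is `[Δ_b]`-stable on `Δ_{b+1}`, `Δ₁ = (⟨n₁⟩)` is the trivial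
one-block partition, and `Δ_{t+1} = ({j}, Kᶜ)_{j∈K}` (singletons of a nonempty set `K`
together with its complement if nonempty), then the column submatrix `(P₁⋯P_t)^K`
has all its rows identical. -/
theorem chainProd_columns_stable (t : ℕ) (ht : 2 ≤ t)
    (n : Fin (t + 1) → ℕ)
    (Δ : ∀ i : Fin (t + 1), Finpartition (Finset.univ : Finset (Fin (n i))))
    (P : ∀ b : Fin t, Matrix (Fin (n b.castSucc)) (Fin (n b.succ)) ℂ)
    (hstab : ∀ b : Fin t, IsStableOn (P b) (Δ b.castSucc) (Δ b.succ))
    (hΔ₁ : (Δ 0).parts = {Finset.univ})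
    (K : Finset (Fin (n (Fin.last t)))) (hK : K.Nonempty)
    (hΔlast : (Δ (Fin.last t)).parts =
      (K.image fun j => ({j} : Finset (Fin (n (Fin.last t))))) ∪
        (if Kᶜ = ∅ then ∅ else {Kᶜ})) :
    ∀ j ∈ K, ∀ i i' : Fin (n 0),
      chainProd t (fun i => Fin (n i)) P i j =
      chainProd t (fun i => Fin (n i)) P i' j :=
  chainProd_columns_stable_general t n Δ P hstab hΔ₁ K hΔlast
end

section
/- Let P₁,…,P_t be matrices with P_b ∈ C^{n_b×n_{b+1}} [Δ_b]-stable on Δ_{b+1}, Δ₁ = (⟨n₁⟩) the trivial partition, and Δ_{t+1} = the partition of ⟨n_{t+1}⟩ into all singletons. Then P₁P₂⋯P_t = e'·(P₁^{-+}P₂^{-+}⋯P_t^{-+}), where e' is the all-ones column vector of length n₁; i.e., every row of P₁P₂⋯P_t equals the single row of P₁^{-+}P₂^{-+}⋯P_t^{-+}. -/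
lemma chainProd_key (t : ℕ) : ∀ (n : Fin (t + 1) → ℕ)
    (Δ : ∀ i : Fin (t + 1), Finpartition (Finset.univ : Finset (Fin (n i))))
    (P : ∀ b : Fin t, Matrix (Fin (n b.castSucc)) (Fin (n b.succ)) ℂ)
    (g : ∀ b : Fin t, Matrix ↥(Δ b.castSucc).parts ↥(Δ b.succ).parts ℂ)
    (_hg : ∀ (b : Fin t) (K : ↥(Δ b.castSucc).parts) (L : ↥(Δ b.succ).parts),
      ∀ i ∈ (K : Finset (Fin (n b.castSucc))),
        ∑ j ∈ (L : Finset (Fin (n b.succ))), P b i j = g b K L)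
    (K : Finset (Fin (n 0))) (hK : K ∈ (Δ 0).parts)
    (L : Finset (Fin (n (Fin.last t)))) (hL : L ∈ (Δ (Fin.last t)).parts)
    (i : Fin (n 0)) (_hi : i ∈ K),
    ∑ j ∈ L, chainProd t (fun i => Fin (n i)) P i j
      = chainProd t (fun i => ↥(Δ i).parts) g ⟨K, hK⟩ ⟨L, hL⟩ := by
  induction t with
  | zero =>
    intro n Δ P g hg K hK L hL i hi
    simp only [chainProd, Matrix.one_apply]
    by_cases h : K = L
    · subst h
      simp [Finset.sum_ite_eq, hi]
    · have hiL : i ∉ L := fun hiL => h ((Δ 0).eq_of_mem_parts hK hL hi hiL)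
      have : (⟨K, hK⟩ : ↥(Δ 0).parts) ≠ ⟨L, hL⟩ := by simpa [Subtype.ext_iff] using h
      rw [if_neg this]
      refine Finset.sum_eq_zero fun j hj => ?_
      rw [if_neg]; rintro rfl; exact hiL hj
  | succ t ih =>
    intro n Δ P g hg K hK L hL i hi
    simp only [chainProd]; erw [Matrix.mul_apply]; erw [Finset.sum_congr rfl fun j _ => Matrix.mul_apply]
    rw [Finset.sum_comm]
    have hdisj := ((Δ (0 : Fin (t+1)).succ).supIndep.pairwiseDisjoint)
    have h1 : ∀ (F : Fin (n (0 : Fin (t+1)).succ) → ℂ),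
        ∑ k, F k = ∑ K' ∈ (Δ (0 : Fin (t+1)).succ).parts, ∑ k ∈ K', F k := by
      intro F
      calc ∑ k, F k
          = ∑ k ∈ (Δ (0 : Fin (t+1)).succ).parts.biUnion id, F k :=
            (Finset.sum_congr ((Δ (0 : Fin (t+1)).succ).biUnion_parts) fun _ _ => rfl).symm
        _ = ∑ K' ∈ (Δ (0 : Fin (t+1)).succ).parts, ∑ k ∈ id K', F k :=
            Finset.sum_biUnion hdisj
        _ = ∑ K' ∈ (Δ (0 : Fin (t+1)).succ).parts, ∑ k ∈ K', F k := rfl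
    rw [h1]
    rw [show ∀ (F : ↥(Δ (0 : Fin (t+1)).succ).parts → ℂ),
        (∑ K' : ↥(Δ (0 : Fin (t+1)).succ).parts, F K')
          = ∑ K' ∈ (Δ (0 : Fin (t+1)).succ).parts.attach, F K' from fun _ => rfl,
      ← Finset.sum_attach ((Δ (0 : Fin (t+1)).succ).parts)
        (fun K' => ∑ k ∈ K', ∑ j ∈ L,
          P 0 i k * chainProd t (fun i => Fin (n i.succ)) (fun b => P b.succ) k j)]
    refine Finset.sum_congr rfl fun K' _ => ?_
    have hrec : ∀ k ∈ (K' : Finset _),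
        ∑ j ∈ L, chainProd t (fun i => Fin (n i.succ)) (fun b => P b.succ) k j
          = chainProd t (fun i => ↥(Δ i.succ).parts) (fun b => g b.succ) K' ⟨L, hL⟩ :=
      fun k hk => ih (fun i => n i.succ) (fun i => Δ i.succ) (fun b => P b.succ)
        (fun b => g b.succ) (fun b => hg b.succ) K' K'.2 L hL k hk
    calc ∑ k ∈ (K' : Finset _), ∑ j ∈ L,
          P 0 i k * chainProd t (fun i => Fin (n i.succ)) (fun b => P b.succ) k j
        = ∑ k ∈ (K' : Finset _), P 0 i k *
            chainProd t (fun i => ↥(Δ i.succ).parts) (fun b => g b.succ) K' ⟨L, hL⟩ := by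
          refine Finset.sum_congr rfl fun k hk => ?_
          rw [← Finset.mul_sum, hrec k hk]
      _ = (∑ k ∈ (K' : Finset _), P 0 i k) *
            chainProd t (fun i => ↥(Δ i.succ).parts) (fun b => g b.succ) K' ⟨L, hL⟩ := by
          rw [Finset.sum_mul]
      _ = _ := by rw [hg 0 ⟨K, hK⟩ K' i hi]; rfl

/-- if each `P b` is `[Δ_b]`-stable on `Δ_{b+1}`, `Δ₁` is the trivial
one-block partition and `Δ_{t+1}` is the partition into singletons, then every row of
`P₁⋯P_t` equals the single row of the product of the grouped matrices
`P₁^{-+}⋯P_t^{-+}` (i.e. `P₁⋯P_t = e'·(P₁^{-+}⋯P_t^{-+})`). -/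
theorem chainProd_eq_ones_mul_groupedProd (t : ℕ) (ht : 2 ≤ t)
    (n : Fin (t + 1) → ℕ)
    (Δ : ∀ i : Fin (t + 1), Finpartition (Finset.univ : Finset (Fin (n i))))
    (P : ∀ b : Fin t, Matrix (Fin (n b.castSucc)) (Fin (n b.succ)) ℂ)
    (hstab : ∀ b : Fin t, IsStableOn (P b) (Δ b.castSucc) (Δ b.succ))
    (g : ∀ b : Fin t, Matrix ↥(Δ b.castSucc).parts ↥(Δ b.succ).parts ℂ)
    (hg : ∀ (b : Fin t) (K : ↥(Δ b.castSucc).parts) (L : ↥(Δ b.succ).parts),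
      ∀ i ∈ (K : Finset (Fin (n b.castSucc))),
        ∑ j ∈ (L : Finset (Fin (n b.succ))), P b i j = g b K L)
    (hΔ₁ : (Δ 0).parts = {Finset.univ})
    (hΔlast : (Δ (Fin.last t)).parts =
      Finset.univ.image fun j => ({j} : Finset (Fin (n (Fin.last t))))) :
    ∀ (i : Fin (n 0)) (j : Fin (n (Fin.last t)))
      (hU : Finset.univ ∈ (Δ 0).parts) (hj : {j} ∈ (Δ (Fin.last t)).parts),
      chainProd t (fun i => Fin (n i)) P i j =
      chainProd t (fun i => ↥(Δ i).parts) g ⟨Finset.univ, hU⟩ ⟨{j}, hj⟩ := by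
  intro i j hU hj
  have h := chainProd_key t n Δ P g hg Finset.univ hU {j} hj i (Finset.mem_univ i)
  simpa using h
end

section
/- Let P_b, U_b ∈ C^{n_b×n_{b+1}} be [Δ_b]-stable on Δ_{b+1} for b = 1,…,t, with P_b ∼ U_b (i.e., P_b^{-+} = U_b^{-+}) for each b. Then P₁P₂⋯P_t ∼ U₁U₂⋯U_t, i.e., (P₁⋯P_t)^{-+} = (U₁⋯U_t)^{-+}. -/
open Finset

/-- `A` and `B` are both `[Δ]`-stable on `Γ` and have the same grouped matrix. Unlike stability
and similarity separately, this single relation is closed under multiplication. -/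
def Matrix.StablySimilar {ι κ R : Type*} [Fintype ι] [DecidableEq ι] [Fintype κ]
    [DecidableEq κ] [AddCommMonoid R]
    (Δ : Finpartition (univ : Finset ι)) (Γ : Finpartition (univ : Finset κ))
    (A B : Matrix ι κ R) : Prop :=
  ∀ K ∈ Δ.parts, ∀ L ∈ Γ.parts, ∀ i ∈ K, ∀ i' ∈ K, ∑ j ∈ L, A i j = ∑ j ∈ L, B i' j

theorem Finpartition.sum_mul_eq_of_sum_parts_eq_s10 {ι R : Type*} [Fintype ι] [DecidableEq ι]
    [NonUnitalNonAssocSemiring R] (Q : Finpartition (univ : Finset ι)) {a b f : ι → R}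
    (hf : ∀ A ∈ Q.parts, ∀ k ∈ A, ∀ k' ∈ A, f k = f k')
    (hab : ∀ A ∈ Q.parts, ∑ k ∈ A, a k = ∑ k ∈ A, b k) :
    ∑ k, a k * f k = ∑ k, b k * f k := by
  rw [← Q.biUnion_parts, sum_biUnion Q.disjoint, sum_biUnion Q.disjoint]
  refine sum_congr rfl fun A hA => ?_
  obtain ⟨k₀, hk₀⟩ := Q.nonempty_of_mem_parts hA
  have hconst : ∀ c : ι → R, ∑ k ∈ A, c k * f k = (∑ k ∈ A, c k) * f k₀ := fun c => by
    rw [sum_mul]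
    exact sum_congr rfl fun k hk => by rw [hf A hA k hk k₀ hk₀]
  simp only [id, hconst, hab A hA]

theorem Matrix.sum_mul_apply_eq {ι κ μ R : Type*} [Fintype κ] [NonUnitalNonAssocSemiring R]
    (A : Matrix ι κ R) (B : Matrix κ μ R) (i : ι) (L : Finset μ) :
    ∑ j ∈ L, (A * B) i j = ∑ k, A i k * ∑ j ∈ L, B k j := by
  simp only [Matrix.mul_apply, mul_sum]
  exact sum_comm

namespace Matrix.StablySimilar

variable {ι κ μ R : Type*} [Fintype ι] [DecidableEq ι] [Fintype κ] [DecidableEq κ] [Fintype μ]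
  [DecidableEq μ]
  {Δ : Finpartition (univ : Finset ι)} {Γ : Finpartition (univ : Finset κ)}
  {Λ : Finpartition (univ : Finset μ)}

theorem of_isStableOn {m n : ℕ} {Δ : Finpartition (univ : Finset (Fin m))}
    {Γ : Finpartition (univ : Finset (Fin n))} {P U : Matrix (Fin m) (Fin n) ℂ}
    (hU : IsStableOn U Δ Γ)
    (hsim : ∀ K ∈ Δ.parts, ∀ L ∈ Γ.parts, ∀ i ∈ K, ∑ j ∈ L, P i j = ∑ j ∈ L, U i j) :
    StablySimilar Δ Γ P U :=
  fun K hK L hL i hi i' hi' => (hsim K hK L hL i hi).trans (hU K hK L hL i hi i' hi')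

theorem right [AddCommMonoid R] {A B : Matrix ι κ R} (h : StablySimilar Δ Γ A B) :
    StablySimilar Δ Γ B B :=
  fun K hK L hL i hi i' hi' => (h K hK L hL i hi i hi).symm.trans (h K hK L hL i hi i' hi')

theorem one [NonAssocSemiring R] : StablySimilar Δ Δ (1 : Matrix ι ι R) 1 := by
  intro K hK L hL i hi i' hi'
  have hmem : i ∈ L ↔ i' ∈ L :=
    ⟨fun h => Δ.eq_of_mem_parts hK hL hi h ▸ hi', fun h => Δ.eq_of_mem_parts hK hL hi' h ▸ hi⟩
  simp only [Matrix.one_apply, sum_ite_eq, hmem]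

theorem mul [NonUnitalNonAssocSemiring R] {A B : Matrix ι κ R} {C D : Matrix κ μ R}
    (hAB : StablySimilar Δ Γ A B) (hCD : StablySimilar Γ Λ C D) :
    StablySimilar Δ Λ (A * C) (B * D) := by
  intro K hK L hL i hi i' hi'
  have hrow (k : κ) : ∑ j ∈ L, C k j = ∑ j ∈ L, D k j :=
    have hk := Γ.mem_part (mem_univ k)
    hCD _ (Γ.part_mem.2 (mem_univ k)) L hL k hk k hk
  rw [sum_mul_apply_eq, sum_mul_apply_eq]
  simp only [hrow]
  exact Γ.sum_mul_eq_of_sum_parts_eq_s10 (fun M hM k hk k' hk' => hCD.right M hM L hL k hk k' hk')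
    fun M hM => hAB K hK M hM i hi i' hi'

theorem chainProd {t : ℕ} {τ : Fin (t + 1) → Type} [∀ i, Fintype (τ i)]
    [∀ i, DecidableEq (τ i)] (Δ : ∀ i, Finpartition (univ : Finset (τ i)))
    {P U : ∀ b : Fin t, Matrix (τ b.castSucc) (τ b.succ) ℂ}
    (h : ∀ b, StablySimilar (Δ b.castSucc) (Δ b.succ) (P b) (U b)) :
    StablySimilar (Δ 0) (Δ (Fin.last t)) (chainProd t τ P) (chainProd t τ U) := by
  induction t with
  | zero => exact one
  | succ t ih => exact (h 0).mul (ih (fun i => Δ i.succ) fun b => h b.succ)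

end Matrix.StablySimilar

theorem chainProd_similar_general (t : ℕ)
    (n : Fin (t + 1) → ℕ)
    (Δ : ∀ i : Fin (t + 1), Finpartition (Finset.univ : Finset (Fin (n i))))
    (P U : ∀ b : Fin t, Matrix (Fin (n b.castSucc)) (Fin (n b.succ)) ℂ)
    (hU : ∀ b : Fin t, IsStableOn (U b) (Δ b.castSucc) (Δ b.succ))
    (hsim : ∀ b : Fin t, ∀ K ∈ (Δ b.castSucc).parts, ∀ L ∈ (Δ b.succ).parts, ∀ i ∈ K,
      ∑ j ∈ L, P b i j = ∑ j ∈ L, U b i j) :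
    ∀ K ∈ (Δ 0).parts, ∀ L ∈ (Δ (Fin.last t)).parts, ∀ i ∈ K,
      ∑ j ∈ L, chainProd t (fun i => Fin (n i)) P i j =
      ∑ j ∈ L, chainProd t (fun i => Fin (n i)) U i j := fun K hK L hL i hi =>
  Matrix.StablySimilar.chainProd Δ (fun b => .of_isStableOn (hU b) (hsim b)) K hK L hL i hi i hi

/-- if `P b ∼ U b` (equal grouped matrices) for each `b`, where all are
`[Δ_b]`-stable on `Δ_{b+1}`, then `P₁⋯P_t ∼ U₁⋯U_t`, i.e. the grouped matrices of the
two products are equal. -/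
theorem chainProd_similar (t : ℕ) (ht : 1 ≤ t)
    (n : Fin (t + 1) → ℕ)
    (Δ : ∀ i : Fin (t + 1), Finpartition (Finset.univ : Finset (Fin (n i))))
    (P U : ∀ b : Fin t, Matrix (Fin (n b.castSucc)) (Fin (n b.succ)) ℂ)
    (hP : ∀ b : Fin t, IsStableOn (P b) (Δ b.castSucc) (Δ b.succ))
    (hU : ∀ b : Fin t, IsStableOn (U b) (Δ b.castSucc) (Δ b.succ))
    (hsim : ∀ b : Fin t, ∀ K ∈ (Δ b.castSucc).parts, ∀ L ∈ (Δ b.succ).parts, ∀ i ∈ K,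
      ∑ j ∈ L, P b i j = ∑ j ∈ L, U b i j) :
    ∀ K ∈ (Δ 0).parts, ∀ L ∈ (Δ (Fin.last t)).parts, ∀ i ∈ K,
      ∑ j ∈ L, chainProd t (fun i => Fin (n i)) P i j =
      ∑ j ∈ L, chainProd t (fun i => Fin (n i)) U i j :=
  chainProd_similar_general t n Δ P U hU hsim
end
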